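/- arXiv:2411.14087 — 4 statements merged into one kernel-verified Lean document; each statement's English description precedes it below -/
import Mathlib

section
/- Let F_q be a finite field of odd characteristic, let D ∈ F_q be a nonzero element that is not a square in F_q, and let α ∈ F_q with α ≠ 0. Define polynomials a(x) = 2αx − α² − D, b(x) = 2αx² + (−3α² − D)x + α³ + Dα, c(x) = (−α² − D)x² + (α³ + Dα)x − α⁴/4 − Dα²/2 + 3D²/4, and Δ(x) = b(x)² − 4a(x)c(x) in F_q[x]. Then there is no polynomial f(x) with coefficients in the algebraic closure of F_q such that Δ(x) = f(x)² (i.e., the image of Δ in (algebraic closure of F_q)[x] is not the square of a polynomial). -/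
/-! Over the algebraic closure pick `s` with `s² = D`. Then `Δ` factors as
`(X - s)(X + s)(2αX - α² - s²)(2αX - α² + 3s²)`, and `s` is a simple root: the other factors
vanish at `s` only if `α = ±s` or `α = 3s`, which would make `D` a square in `F_q`
(or, in characteristic `3`, force `α = 0`). A square polynomial has no simple roots. -/

open Polynomial

theorem not_isSquare_X_sub_C_mul {R : Type*} [CommRing R] [IsDomain R] {r : R} {q : R[X]}
    (hq : q.eval r ≠ 0) : ¬ IsSquare ((X - C r) * q) := by
  rintro ⟨f, hf⟩
  have hfr : f.IsRoot r := by
    simpa using congrArg (eval r) hf.symm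
  obtain ⟨g, rfl⟩ := dvd_iff_isRoot.mpr hfr
  have hqg : q = (X - C r) * (g * g) := by
    apply mul_left_cancel₀ (X_sub_C_ne_zero r)
    rw [hf]
    ring
  exact hq (by simp [hqg])

noncomputable def abcDiscriminant {K : Type*} [Field K] (α D : K) : K[X] :=
  (C (2 * α) * X ^ 2 + C (-3 * α ^ 2 - D) * X + C (α ^ 3 + D * α)) ^ 2 -
    C 4 * (C (2 * α) * X + C (-α ^ 2 - D)) *
      (C (-α ^ 2 - D) * X ^ 2 + C (α ^ 3 + D * α) * X +
        C (-(α ^ 4) / 4 - D * α ^ 2 / 2 + 3 * D ^ 2 / 4))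

theorem map_abcDiscriminant {F K : Type*} [Field F] [Field K] (i : F →+* K) (α D : F) :
    (abcDiscriminant α D).map i = abcDiscriminant (i α) (i D) := by
  simp [abcDiscriminant, map_div₀, map_ofNat]

section Factorization

variable {K : Type*} [Field K] (a s : K)

theorem abcDiscriminant_sq_eq (h2 : (2 : K) ≠ 0) :
    abcDiscriminant a (s ^ 2) = (X - C s) *
      ((X + C s) * (C (2 * a) * X - C (a ^ 2 + s ^ 2)) *
        (C (2 * a) * X - C (a ^ 2 - 3 * s ^ 2))) := by
  have hconst : (4 : K) * (-(a ^ 4) / 4 - s ^ 2 * a ^ 2 / 2 + 3 * (s ^ 2) ^ 2 / 4) =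
      -(a ^ 2 + 3 * s ^ 2) * (a ^ 2 - s ^ 2) := by
    have h4 : (4 : K) ≠ 0 := by
      convert mul_ne_zero h2 h2 using 1
      norm_num
    field_simp
    ring
  unfold abcDiscriminant
  -- isolate the only coefficient with denominators, so that the rest is a ring identity
  set c := (-(a ^ 4) / 4 - s ^ 2 * a ^ 2 / 2 + 3 * (s ^ 2) ^ 2 / 4 : K)
  have hc : 4 * C c = -(C a ^ 2 + 3 * C s ^ 2) * (C a ^ 2 - C s ^ 2) := by
    rw [← C_ofNat, ← C_mul, hconst]
    simp only [map_mul, map_neg, map_sub, map_add, map_pow, C_ofNat]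
  simp only [map_mul, map_neg, map_sub, map_add, map_pow, C_ofNat]
  linear_combination (-(2 * C a * X - C a ^ 2 - C s ^ 2)) * hc

theorem not_isSquare_abcDiscriminant_sq (h2 : (2 : K) ≠ 0) (hs : s ≠ 0) (has : a ≠ s)
    (hans : a ≠ -s) (ha3s : a ≠ 3 * s) : ¬ IsSquare (abcDiscriminant a (s ^ 2)) := by
  rw [abcDiscriminant_sq_eq a s h2]
  apply not_isSquare_X_sub_C_mul
  have hval : ((X + C s) * (C (2 * a) * X - C (a ^ 2 + s ^ 2)) *
      (C (2 * a) * X - C (a ^ 2 - 3 * s ^ 2))).eval s =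
        2 * s * (a - s) ^ 2 * ((a - 3 * s) * (a + s)) := by
    simp only [eval_sub, eval_add, eval_mul, eval_C, eval_X]
    ring
  rw [hval]
  have : a + s ≠ 0 := fun h => hans (eq_neg_of_add_eq_zero_left h)
  have := sub_ne_zero.mpr has
  have := sub_ne_zero.mpr ha3s
  positivity

end Factorization

theorem eq_zero_or_exists_sq_of_map_eq_mul {F K : Type*} [Field F] [Field K] (i : F →+* K)
    {α c D : F} {s : K} (hs : s ^ 2 = i D) (h : i α = i c * s) : α = 0 ∨ ∃ w : F, D = w ^ 2 := by
  by_cases hc : c = 0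
  · left
    simpa [hc] using h
  · right
    refine ⟨α / c, i.injective ?_⟩
    rw [map_pow, map_div₀, h, ← hs]
    field_simp [(map_ne_zero i).mpr hc]

theorem discriminant_odd_not_square_general (F : Type*) [Field F]
    (hchar : ringChar F ≠ 2) (D : F) (hDns : ¬ ∃ w : F, D = w ^ 2)
    (α : F) (hα : α ≠ 0) :
    ¬ ∃ f : Polynomial (AlgebraicClosure F),
      Polynomial.map (algebraMap F (AlgebraicClosure F))
        ((C (2 * α) * X ^ 2 + C (-3 * α ^ 2 - D) * X + C (α ^ 3 + D * α)) ^ 2 -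
          C 4 * (C (2 * α) * X + C (-α ^ 2 - D)) *
            (C (-α ^ 2 - D) * X ^ 2 + C (α ^ 3 + D * α) * X +
              C (-(α ^ 4) / 4 - D * α ^ 2 / 2 + 3 * D ^ 2 / 4))) = f ^ 2 := by
  rintro ⟨f, hf⟩
  set i := algebraMap F (AlgebraicClosure F)
  obtain ⟨s, hs⟩ := IsAlgClosed.exists_pow_nat_eq (i D) two_pos
  have hne_mul {c : F} (h : i α = i c * s) : False :=
    (eq_zero_or_exists_sq_of_map_eq_mul i hs h).elim hα hDns
  have hs0 : s ≠ 0 := by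
    rintro rfl
    exact hDns ⟨0, i.injective (by simp [← hs])⟩
  have h2 : (2 : AlgebraicClosure F) ≠ 0 := by
    simpa [map_ofNat] using (map_ne_zero i).mpr (Ring.two_ne_zero hchar)
  refine not_isSquare_abcDiscriminant_sq (i α) s h2 hs0 (fun h => hne_mul (c := 1) (by simp [h]))
    (fun h => hne_mul (c := -1) (by simp [h])) (fun h => hne_mul (c := 3) (by rw [h, map_ofNat])) ?_
  rw [hs, ← map_abcDiscriminant]
  exact ⟨f, hf.trans (sq f)⟩

/-- Finite field of odd characteristic, `D` a nonzero non-square, `α ≠ 0`. The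
discriminant polynomial `Δ(x) = b(x)² − 4a(x)c(x)`, with
`a(x) = 2αx − α² − D`, `b(x) = 2αx² + (−3α² − D)x + α³ + Dα`,
`c(x) = (−α² − D)x² + (α³ + Dα)x − α⁴/4 − Dα²/2 + 3D²/4`,
is not the square of any polynomial over the algebraic closure of `F`. -/
theorem discriminant_odd_not_square (F : Type*) [Field F] [Fintype F]
    (hchar : ringChar F ≠ 2) (D : F) (hD0 : D ≠ 0) (hDns : ¬ ∃ w : F, D = w ^ 2)
    (α : F) (hα : α ≠ 0) :
    ¬ ∃ f : Polynomial (AlgebraicClosure F),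
      Polynomial.map (algebraMap F (AlgebraicClosure F))
        ((C (2 * α) * X ^ 2 + C (-3 * α ^ 2 - D) * X + C (α ^ 3 + D * α)) ^ 2 -
          C 4 * (C (2 * α) * X + C (-α ^ 2 - D)) *
            (C (-α ^ 2 - D) * X ^ 2 + C (α ^ 3 + D * α) * X +
              C (-(α ^ 4) / 4 - D * α ^ 2 / 2 + 3 * D ^ 2 / 4))) = f ^ 2 :=
  discriminant_odd_not_square_general F hchar D hDns α hα
end

section
/- Assume the standard setup, and let ℓ ≥ 3 be an integer with q ≡ 2^ℓ − 1 (mod 2^{ℓ+1}). Let L be the unique subfield of F with q elements (so K ⊆ L ⊆ F), let m = (q0−1)/2, and let H_m be the unique subgroup of Fˣ of order m(q+1). Then the following are equivalent: (a) there exists γ ∈ Fˣ with (γ^{q−1})^{2^{ℓ−1}} = 1 such that γ (as an element of F) cannot be written as h1 + h2 with h1, h2 ∈ H_m; (b) there exists x ∈ L with x ≠ 0 such that for every nonzero square α of K, the element x² − α of L is a nonzero square in L. -/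
/-!
Write `σ x = x ^ q` for the Frobenius of `F / L` and `N x = x * σ x = x ^ (q + 1)`. A unit lies
in `H_m` exactly when its norm is `a²` with `a ∈ Kˣ`.

If `x = h₁ + h₂` with `x ∈ L`, `N h₁ = α²` and `N h₂ = β²`, then `d = h₁ σ h₂ - σ h₁ h₂`
satisfies `σ d = -d` and `d² = (x² - (α + β)²) (x² - (α - β)²)`, so these two factors cannot
both be nonzero squares in `L`; hence (b) gives (a) with `γ = x`.

Conversely, since `2^ℓ ∣ q + 1`, the condition on `γ` makes `N γ = x²` a square in `L`. If
`x² - 4a²` (`a ∈ Kˣ`) is not a nonzero square in `L`, then `N γ (N γ - 4a²) = δ²` for some `δ`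
with `σ δ = -δ`, and `h₂ = 2a²γ / (N γ + δ)`, `h₁ = γ - h₂` both have norm `a²`, i.e. lie in
`H_m`.
-/

theorem two_pow_dvd_succ_of_modEq {q ℓ : ℕ} (h : q ≡ 2 ^ ℓ - 1 [MOD 2 ^ (ℓ + 1)]) :
    2 ^ ℓ ∣ q + 1 := by
  have := (h.add_right 1).of_dvd (pow_dvd_pow 2 ℓ.le_succ)
  rw [Nat.sub_add_cancel Nat.one_le_two_pow] at this
  exact Nat.modEq_zero_iff_dvd.1 (this.trans (Nat.modEq_zero_iff_dvd.2 dvd_rfl))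

theorem sub_one_mul_two_pow_dvd {q ℓ : ℕ} (hℓ : 1 ≤ ℓ) (h : 2 ^ ℓ ∣ q + 1) :
    (q - 1) * 2 ^ (ℓ - 1) ∣ (q + 1) * (q / 2) := by
  have hq : 2 * (q / 2) = q - 1 := by
    have := (dvd_pow_self 2 (by omega : ℓ ≠ 0)).trans h
    omega
  obtain ⟨t, ht⟩ := h
  have h2 : 2 ^ ℓ = 2 * 2 ^ (ℓ - 1) := by rw [← pow_succ']; congr 1; omega
  exact ⟨t, by rw [ht, h2, ← hq]; ring⟩

theorem ringChar_ne_two_of_odd_card {E : Type*} [Field E] [Fintype E]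
    (h : Odd (Fintype.card E)) : ringChar E ≠ 2 := fun h2 ↦ by
  have := FiniteField.even_card_of_char_two h2
  rw [Nat.odd_iff] at h
  omega

open Polynomial in
theorem Subfield.mem_iff_pow_card_eq_self {F : Type*} [Field F] (L : Subfield F) [Finite L]
    {x : F} : x ∈ L ↔ x ^ Nat.card L = x := by
  have := Fintype.ofFinite L
  have hq : 1 < Fintype.card L := Fintype.one_lt_card
  have hsplit : Splits (X ^ Fintype.card L - X : L[X]) := by
    rw [splits_iff_card_roots, FiniteField.roots_X_pow_card_sub_X, ← Finset.card_def,
      Finset.card_univ, FiniteField.X_pow_card_sub_X_natDegree_eq _ hq]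
  have := FiniteField.roots_X_pow_card_sub_X L ▸ hsplit.roots_map L.subtype ▸
    Multiset.mem_map (b := x)
  simpa [sub_eq_zero, iff_comm, FiniteField.X_pow_card_sub_X_ne_zero F hq,
    Nat.card_eq_fintype_card] using this

theorem Subfield.pow_card_sub_one_eq_one {F : Type*} [Field F] (L : Subfield F) [Finite L]
    {x : F} (hx : x ∈ L) (hx0 : x ≠ 0) : x ^ (Nat.card L - 1) = 1 := by
  have := Fintype.ofFinite L
  have hx0' : (⟨x, hx⟩ : L) ≠ 0 := fun h ↦ hx0 (congrArg Subtype.val h)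
  simpa [Nat.card_eq_fintype_card] using
    congrArg Subtype.val (FiniteField.pow_card_sub_one_eq_one _ hx0')

theorem Subfield.pow_eq_one_iff_exists_sq {F : Type*} [Field F] [Finite F] (K : Subfield F)
    {m : ℕ} (hK : Nat.card K = 2 * m + 1) {c : F} (hc : c ≠ 0) :
    c ^ m = 1 ↔ ∃ a ∈ K, c = a ^ 2 := by
  have := Fintype.ofFinite K
  constructor
  · intro h
    have hcK : c ∈ K := by
      rw [K.mem_iff_pow_card_eq_self, hK, pow_succ, pow_mul', h, one_pow, one_mul]
    rw [Nat.card_eq_fintype_card] at hK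
    have hc' : (⟨c, hcK⟩ : K) ≠ 0 := fun h0 ↦ hc (congrArg Subtype.val h0)
    have hm : (2 * m + 1) / 2 = m := by omega
    obtain ⟨a, ha⟩ :=
      (FiniteField.isSquare_iff (ringChar_ne_two_of_odd_card (by simp [hK])) hc').2
        (Subtype.ext (by simpa [hK, hm] using h))
    exact ⟨a, a.2, by simpa [sq] using congrArg Subtype.val ha⟩
  · rintro ⟨a, ha, rfl⟩
    have := K.pow_card_sub_one_eq_one ha (by rintro rfl; simp at hc)
    rwa [hK, Nat.add_sub_cancel, pow_mul] at this

theorem IsCyclic.mem_iff_pow_card_eq_one {G : Type*} [Group G] [Finite G] [IsCyclic G]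
    (H : Subgroup G) {g : G} : g ∈ H ↔ g ^ Nat.card H = 1 := by
  classical
  have := Fintype.ofFinite G
  have hpow : ∀ a ∈ H, a ^ Nat.card H = 1 := fun a ha ↦
    orderOf_dvd_iff_pow_eq_one.1 (H.orderOf_dvd_natCard ha)
  refine ⟨hpow g, fun hg ↦ ?_⟩
  have hsub : (H : Set G).toFinset ⊆ ({a | a ^ Nat.card H = 1} : Finset G) := fun a ha ↦ by
    simpa [Nat.card_eq_fintype_card] using hpow a (by simpa using ha)
  have heq := Finset.eq_of_subset_of_card_le hsub (by
    rw [Set.toFinset_card, ← Nat.card_eq_fintype_card]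
    exact IsCyclic.card_pow_eq_one_le Nat.card_pos)
  have hmem : g ∈ ({a | a ^ Nat.card H = 1} : Finset G) := by simpa using hg
  rw [← heq] at hmem
  simpa using hmem

theorem Subgroup.mem_units_iff_exists_pow_eq_sq {F : Type*} [Field F] [Finite F] {K : Subfield F}
    {H : Subgroup Fˣ} {m n : ℕ} (hK : Nat.card K = 2 * m + 1) (hH : Nat.card H = m * n)
    (u : Fˣ) : u ∈ H ↔ ∃ a ∈ K, (u : F) ^ n = a ^ 2 := by
  rw [IsCyclic.mem_iff_pow_card_eq_one, hH, mul_comm, pow_mul, ← Units.val_eq_one,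
    Units.val_pow_eq_pow_val, Units.val_pow_eq_pow_val]
  exact K.pow_eq_one_iff_exists_sq hK (pow_ne_zero _ u.ne_zero)

section Involution

variable {F G : Type*} [Field F] [FunLike G F F] [RingHomClass G F F] (σ : G)

theorem exists_map_eq_neg_sq_eq_of_eq_add (hσ : Function.Involutive σ) {x h₁ h₂ α β : F}
    (hx : σ x = x) (hsum : x = h₁ + h₂) (h₁α : h₁ * σ h₁ = α ^ 2) (h₂β : h₂ * σ h₂ = β ^ 2) :
    ∃ d, σ d = -d ∧ d ^ 2 = (x ^ 2 - (α + β) ^ 2) * (x ^ 2 - (α - β) ^ 2) := by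
  subst hsum
  have hσsum : σ h₁ + σ h₂ = h₁ + h₂ := by rw [← map_add, hx]
  have hsq : (h₁ + h₂) ^ 2 = α ^ 2 + β ^ 2 + (h₁ * σ h₂ + σ h₁ * h₂) := by
    linear_combination -(h₁ + h₂) * hσsum + h₁α + h₂β
  refine ⟨h₁ * σ h₂ - σ h₁ * h₂, ?_, ?_⟩
  · simp only [map_sub, map_mul, hσ _]
    ring
  · rw [hsq]
    linear_combination (-4 * h₂ * σ h₂) * h₁α + (-4 * α ^ 2) * h₂β

theorem eq_zero_of_sq_eq_sq_of_map_eq_neg (h2 : (2 : F) ≠ 0) {d v : F} (hd : σ d = -d)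
    (hv : σ v = v) (h : d ^ 2 = v ^ 2) : v = 0 := by
  have h2v : 2 * v = 0 := by
    rcases sq_eq_sq_iff_eq_or_eq_neg.1 h with rfl | rfl
    · linear_combination hd - hv
    · rw [map_neg, neg_neg] at hd
      linear_combination -hd - hv
  exact (mul_eq_zero.1 h2v).resolve_left h2

theorem exists_add_eq_of_sq_eq (hσ : Function.Involutive σ) (h2 : (2 : F) ≠ 0) {γ a δ : F}
    (hγ : γ ≠ 0) (ha : a ≠ 0) (hσa : σ a = a) (hδ : δ ^ 2 = γ * σ γ * (γ * σ γ - 4 * a ^ 2))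
    (hσδ : σ δ = -δ) :
    ∃ h₁ h₂, h₁ * σ h₁ = a ^ 2 ∧ h₂ * σ h₂ = a ^ 2 ∧ γ = h₁ + h₂ := by
  set c := γ * σ γ with hc
  have hσc : σ c = c := by rw [hc, map_mul, hσ γ, mul_comm]
  have hc0 : c ≠ 0 := mul_ne_zero hγ ((map_ne_zero σ).2 hγ)
  have hσe : σ (c + δ) = c - δ := by rw [map_add, hσc, hσδ, sub_eq_add_neg]
  have hnorm : (c + δ) * (c - δ) = 4 * a ^ 2 * c := by linear_combination -hδ
  have he : c + δ ≠ 0 := by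
    intro h
    rw [h, zero_mul] at hnorm
    have h4 : (4 : F) ≠ 0 := by rw [show (4 : F) = 2 * 2 by norm_num]; exact mul_ne_zero h2 h2
    exact mul_ne_zero (mul_ne_zero h4 (pow_ne_zero 2 ha)) hc0 hnorm.symm
  have he' : c - δ ≠ 0 := hσe ▸ (map_ne_zero σ).2 he
  -- `h₁ / h₂ = (c + δ) / (2a²) - 1` is a root of `T² - (c / a² - 2) T + 1`, so it has norm `1`
  refine ⟨γ - 2 * a ^ 2 * γ / (c + δ), 2 * a ^ 2 * γ / (c + δ), ?_, ?_, by ring⟩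
  · simp only [map_sub, map_div₀, map_mul, map_pow, map_ofNat, hσa, hσe]
    field_simp
    linear_combination (a ^ 2 - c) * hδ - (c + δ - 2 * a ^ 2) * (c - δ - 2 * a ^ 2) * hc
  · simp only [map_div₀, map_mul, map_pow, map_ofNat, hσa, hσe]
    field_simp
    rw [hnorm, hc]
    ring

end Involution

section Frobenius

open FiniteField

variable {F : Type*} [Field F] [Fintype F] (L : Subfield F) [Fintype L]

theorem frobeniusAlgHom_involutive (hFL : Fintype.card F = Fintype.card L ^ 2) :
    Function.Involutive (frobeniusAlgHom L F) := fun x ↦ by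
  simp only [coe_frobeniusAlgHom, ← pow_mul, ← sq, ← hFL, pow_card]

theorem frobeniusAlgHom_eq_self_iff {x : F} : frobeniusAlgHom L F x = x ↔ x ∈ L := by
  rw [L.mem_iff_pow_card_eq_self, Nat.card_eq_fintype_card, coe_frobeniusAlgHom]

theorem exists_sq_eq_and_frobeniusAlgHom_eq_neg (hFL : Fintype.card F = Fintype.card L ^ 2)
    (hodd : Odd (Fintype.card L)) {c : F} (hc : c ∈ L) (hsq : ¬(c ≠ 0 ∧ ∃ w ∈ L, c = w ^ 2)) :
    ∃ δ, δ ^ 2 = c ∧ frobeniusAlgHom L F δ = -δ := by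
  by_cases hc0 : c = 0
  · exact ⟨0, by simp [hc0], by simp⟩
  obtain ⟨r, rfl⟩ : IsSquare c := by
    have hcF : ringChar F ≠ 2 := ringChar_ne_two_of_odd_card (hFL ▸ hodd.pow)
    obtain ⟨k, hk⟩ := hodd
    have hk2 : (2 * k + 1) ^ 2 / 2 = 2 * k * (k + 1) := by
      rw [show (2 * k + 1) ^ 2 = 2 * (2 * k * (k + 1)) + 1 by ring]; omega
    have hc1 := L.pow_card_sub_one_eq_one hc hc0
    rw [Nat.card_eq_fintype_card, hk, Nat.add_sub_cancel] at hc1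
    rw [FiniteField.isSquare_iff hcF hc0, hFL, hk, hk2, pow_mul, hc1, one_pow]
  have hσr : (frobeniusAlgHom L F r) ^ 2 = r ^ 2 := by
    rw [← map_pow, (frobeniusAlgHom_eq_self_iff L).2 (by rwa [sq])]
  rcases sq_eq_sq_iff_eq_or_eq_neg.1 hσr with h | h
  · exact absurd ⟨hc0, r, (frobeniusAlgHom_eq_self_iff L).1 h, (sq r).symm⟩ hsq
  · exact ⟨r, sq r, h⟩

end Frobenius

section Directions

open FiniteField

variable {F : Type*} [Field F] [Fintype F] {K L : Subfield F} [Fintype L] {Hm : Subgroup Fˣ}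
  {m : ℕ}

theorem exists_mem_pow_succ_eq_sq {ℓ : ℕ} (hℓ : 1 ≤ ℓ) (hdvd : 2 ^ ℓ ∣ Fintype.card L + 1)
    {γ : Fˣ} (hγ : (γ ^ (Fintype.card L - 1)) ^ 2 ^ (ℓ - 1) = 1) :
    ∃ x ∈ L, (γ : F) ^ (Fintype.card L + 1) = x ^ 2 := by
  obtain ⟨t, ht⟩ := sub_one_mul_two_pow_dvd hℓ hdvd
  have hnorm : ((γ : F) ^ (Fintype.card L + 1)) ^ (Fintype.card L / 2) = 1 := by
    rw [← Units.val_pow_eq_pow_val, ← Units.val_pow_eq_pow_val, ← pow_mul, ht, pow_mul, pow_mul,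
      hγ, one_pow, Units.val_one]
  have hL : Nat.card L = 2 * (Fintype.card L / 2) + 1 := by
    have := (dvd_pow_self 2 (by omega : ℓ ≠ 0)).trans hdvd
    rw [Nat.card_eq_fintype_card]
    omega
  exact (L.pow_eq_one_iff_exists_sq hL (pow_ne_zero _ γ.ne_zero)).1 hnorm

theorem sub_sq_of_forall_ne_add (hFL : Fintype.card F = Fintype.card L ^ 2)
    (hodd : Odd (Fintype.card L)) (hK : Nat.card K = 2 * m + 1)
    (hHm : Nat.card Hm = m * (Fintype.card L + 1)) (hKL : K ≤ L) {γ : Fˣ}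
    (hγ : ∀ h₁ h₂ : Fˣ, h₁ ∈ Hm → h₂ ∈ Hm → (γ : F) ≠ h₁ + h₂) {x : F} (hx : x ∈ L)
    (hγx : (γ : F) ^ (Fintype.card L + 1) = x ^ 2) {w : F} (hw : w ∈ K) (hw0 : w ≠ 0) :
    x ^ 2 - w ^ 2 ≠ 0 ∧ ∃ v ∈ L, x ^ 2 - w ^ 2 = v ^ 2 := by
  by_contra hne
  set σ := frobeniusAlgHom L F
  have h2 : (2 : F) ≠ 0 := Ring.two_ne_zero (ringChar_ne_two_of_odd_card (hFL ▸ hodd.pow))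
  obtain ⟨δ, hδ, hσδ⟩ := exists_sq_eq_and_frobeniusAlgHom_eq_neg L hFL hodd
    (L.sub_mem (L.pow_mem hx 2) (L.pow_mem (hKL hw) 2)) hne
  have hσx : σ x = x := (frobeniusAlgHom_eq_self_iff L).2 hx
  have hnorm : (γ : F) * σ γ = x ^ 2 := by rw [← hγx, pow_succ']; rfl
  have ha : w / 2 ∈ K := K.div_mem hw (ofNat_mem K 2)
  obtain ⟨h₁, h₂, hh₁, hh₂, hsum⟩ := exists_add_eq_of_sq_eq σ (frobeniusAlgHom_involutive L hFL)
    h2 γ.ne_zero (div_ne_zero hw0 h2) ((frobeniusAlgHom_eq_self_iff L).2 (hKL ha))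
    (δ := x * δ) (by rw [hnorm, mul_pow, hδ]; field_simp; ring)
    (by rw [map_mul, hσx, hσδ, mul_neg])
  have hunit : ∀ h : F, h * σ h = (w / 2) ^ 2 → ∃ u ∈ Hm, (u : F) = h := fun h hh ↦ by
    have h0 : h ≠ 0 := by
      rintro rfl
      exact pow_ne_zero 2 (div_ne_zero hw0 h2) (by simpa using hh.symm)
    refine ⟨Units.mk0 h h0,
      (Subgroup.mem_units_iff_exists_pow_eq_sq hK hHm _).2 ⟨w / 2, ha, ?_⟩, rfl⟩
    rw [Units.val_mk0, pow_succ', ← hh]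
    rfl
  obtain ⟨u₁, hu₁, rfl⟩ := hunit h₁ hh₁
  obtain ⟨u₂, hu₂, rfl⟩ := hunit h₂ hh₂
  exact hγ u₁ u₂ hu₁ hu₂ hsum

theorem ne_add_of_forall_sub_sq (hFL : Fintype.card F = Fintype.card L ^ 2)
    (hodd : Odd (Fintype.card L)) (hK : Nat.card K = 2 * m + 1)
    (hHm : Nat.card Hm = m * (Fintype.card L + 1)) {x : F} (hx : x ∈ L) (hx0 : x ≠ 0)
    (hsq : ∀ w ∈ K, w ≠ 0 → x ^ 2 - w ^ 2 ≠ 0 ∧ ∃ v ∈ L, x ^ 2 - w ^ 2 = v ^ 2)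
    {h₁ h₂ : Fˣ} (hh₁ : h₁ ∈ Hm) (hh₂ : h₂ ∈ Hm) : x ≠ h₁ + h₂ := by
  intro hsum
  set σ := frobeniusAlgHom L F
  have h2 : (2 : F) ≠ 0 := Ring.two_ne_zero (ringChar_ne_two_of_odd_card (hFL ▸ hodd.pow))
  have hσx : σ x = x := (frobeniusAlgHom_eq_self_iff L).2 hx
  have hnorm (u : Fˣ) : (u : F) * σ u = (u : F) ^ (Fintype.card L + 1) := (pow_succ' _ _).symm
  obtain ⟨α, hαK, hα⟩ := (Subgroup.mem_units_iff_exists_pow_eq_sq hK hHm h₁).1 hh₁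
  obtain ⟨β, hβK, hβ⟩ := (Subgroup.mem_units_iff_exists_pow_eq_sq hK hHm h₂).1 hh₂
  obtain ⟨d, hσd, hd⟩ := exists_map_eq_neg_sq_eq_of_eq_add σ (frobeniusAlgHom_involutive L hFL)
    hσx hsum (hnorm h₁ ▸ hα) (hnorm h₂ ▸ hβ)
  have hsub_sq : ∀ c ∈ K, ∃ v, σ v = v ∧ v ≠ 0 ∧ x ^ 2 - c ^ 2 = v ^ 2 := fun c hc ↦ by
    by_cases hc0 : c = 0
    · exact ⟨x, hσx, hx0, by simp [hc0]⟩
    obtain ⟨hne, v, hv, hv'⟩ := hsq c hc hc0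
    exact ⟨v, (frobeniusAlgHom_eq_self_iff L).2 hv, by rintro rfl; exact hne (by simpa using hv'),
      hv'⟩
  obtain ⟨v₁, hσv₁, hv₁, hv₁'⟩ := hsub_sq (α + β) (K.add_mem hαK hβK)
  obtain ⟨v₂, hσv₂, hv₂, hv₂'⟩ := hsub_sq (α - β) (K.sub_mem hαK hβK)
  refine mul_ne_zero hv₁ hv₂ (eq_zero_of_sq_eq_sq_of_map_eq_neg σ h2 hσd ?_ ?_)
  · rw [map_mul, hσv₁, hσv₂]
  · rw [hd, hv₁', hv₂', mul_pow]

end Directions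

theorem propertyNPi_even_iff_general (q0 q ℓ : ℕ)
    (hq0odd : Odd q0) (hℓ : 3 ≤ ℓ)
    (hqmod : q ≡ 2 ^ ℓ - 1 [MOD 2 ^ (ℓ + 1)])
    (F : Type*) [Field F] [Fintype F] (hF : Fintype.card F = q ^ 2)
    (K : Subfield F) (hK : Nat.card K = q0)
    (L : Subfield F) (hL : Nat.card L = q) (hKL : K ≤ L)
    (m : ℕ) (hm : m = (q0 - 1) / 2)
    (Hm : Subgroup Fˣ) (hHm : Nat.card Hm = m * (q + 1)) :
    (∃ γ : Fˣ, (γ ^ (q - 1)) ^ 2 ^ (ℓ - 1) = 1 ∧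
        ∀ h1 h2 : Fˣ, h1 ∈ Hm → h2 ∈ Hm → (γ : F) ≠ (h1 : F) + (h2 : F)) ↔
      (∃ x : F, x ∈ L ∧ x ≠ 0 ∧
        ∀ α : F, α ∈ K → α ≠ 0 → (∃ w ∈ K, α = w ^ 2) →
          (x ^ 2 - α ≠ 0 ∧ ∃ w ∈ L, x ^ 2 - α = w ^ 2)) := by
  have hdvd : 2 ^ ℓ ∣ q + 1 := two_pow_dvd_succ_of_modEq hqmod
  have hodd : Odd q := by
    have := (dvd_pow_self 2 (by omega : ℓ ≠ 0)).trans hdvd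
    exact Nat.odd_iff.2 (by omega)
  have hK' : Nat.card K = 2 * m + 1 := by obtain ⟨k, rfl⟩ := hq0odd; omega
  have := Fintype.ofFinite L
  rw [Nat.card_eq_fintype_card] at hL
  subst hL
  constructor
  · rintro ⟨γ, hγ, hne⟩
    obtain ⟨x, hx, hγx⟩ := exists_mem_pow_succ_eq_sq (by omega) hdvd hγ
    refine ⟨x, hx, ?_, fun α _ hα0 ⟨w, hw, hαw⟩ ↦ ?_⟩
    · rintro rfl
      simp at hγx
    · subst hαw
      exact sub_sq_of_forall_ne_add hF hodd hK' hHm hKL hne hx hγx hw (by rintro rfl; simp at hα0)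
  · rintro ⟨x, hx, hx0, hsq⟩
    refine ⟨Units.mk0 x hx0, ?_, fun h₁ h₂ ↦ ne_add_of_forall_sub_sq hF hodd hK' hHm hx hx0
      (fun w hw hw0 ↦ hsq _ (K.pow_mem hw 2) (pow_ne_zero 2 hw0) ⟨w, hw, rfl⟩)⟩
    have hx1 : Units.mk0 x hx0 ^ (Fintype.card L - 1) = 1 :=
      Units.ext (by simpa [Nat.card_eq_fintype_card] using L.pow_card_sub_one_eq_one hx hx0)
    rw [hx1, one_pow]

/-- Standard setup, `ℓ ≥ 3`, `q ≡ 2^ℓ − 1 (mod 2^(ℓ+1))`. Property NPi for an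
even index holds iff there exists nonzero `x ∈ L` such that `x² − α` is a
nonzero square in `L` for every nonzero square `α` of `K`. -/
theorem propertyNPi_even_iff (q0 s q ℓ : ℕ) (hq0 : IsPrimePow q0)
    (hq0odd : Odd q0) (hs : Odd s) (hq : q = q0 ^ s) (hℓ : 3 ≤ ℓ)
    (hqmod : q ≡ 2 ^ ℓ - 1 [MOD 2 ^ (ℓ + 1)])
    (F : Type*) [Field F] [Fintype F] (hF : Fintype.card F = q ^ 2)
    (K : Subfield F) (hK : Nat.card K = q0)
    (L : Subfield F) (hL : Nat.card L = q) (hKL : K ≤ L)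
    (m : ℕ) (hm : m = (q0 - 1) / 2)
    (Hm : Subgroup Fˣ) (hHm : Nat.card Hm = m * (q + 1)) :
    (∃ γ : Fˣ, (γ ^ (q - 1)) ^ 2 ^ (ℓ - 1) = 1 ∧
        ∀ h1 h2 : Fˣ, h1 ∈ Hm → h2 ∈ Hm → (γ : F) ≠ (h1 : F) + (h2 : F)) ↔
      (∃ x : F, x ∈ L ∧ x ≠ 0 ∧
        ∀ α : F, α ∈ K → α ≠ 0 → (∃ w ∈ K, α = w ^ 2) →
          (x ^ 2 - α ≠ 0 ∧ ∃ w ∈ L, x ^ 2 - α = w ^ 2)) :=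
  propertyNPi_even_iff_general q0 q ℓ hq0odd hℓ hqmod F hF K hK L hL hKL m hm Hm hHm
end

section
/- Let q0 be an odd prime power with q0 ≡ 7 (mod 8), and let s ≥ 1 and t ≥ 1 be odd integers. Let F be a finite field with q0^{2s} elements, K its q0-element subfield, and H the unique subgroup of Fˣ of order q0^s + 1; let F′ be a finite field with q0^{2st} elements, K′ its q0-element subfield, and H′ the unique subgroup of F′ˣ of order q0^{st} + 1. If there exists μ ∈ F such that μ ≠ c1·h1 + c2·h2 for all c1, c2 ∈ K and all h1, h2 ∈ H, then there exists μ′ ∈ F′ such that μ′ ≠ c1·h1 + c2·h2 for all c1, c2 ∈ K′ and all h1, h2 ∈ H′. Equivalently: if the covering radius of C_s(q0) is 3, then the covering radius of C_{st}(q0) is 3. -/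
/-!
Embed `F` into `F'`, which is possible because `|F'| = |F| ^ t`, and suppose
`e μ = c₁ A + c₂ B` in `F'`. The coefficients `cᵢ ∈ K'` come from `K`. Taking the norm
`x ↦ x ^ (Q + 1)`, `Q = q0 ^ (s t)`, of both sides shows `u + u⁻¹ ∈ e F` for `u = A / B`.
As `[F' : e F] = t` is odd, this forces `u ∈ e F`: the Frobenius of `F' / e F` can only fix `u`
or swap it with `u⁻¹`, and its `t`-th power is the identity. Hence `A, B ∈ e F`, and since
`x ^ Q = x ^ q` on `F` for `q = q0 ^ s` and odd `t`, they come from `H`, so `μ` itself is a sum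
of two terms `c h`.
-/

open Polynomial

theorem pow_pow_eq_self_of_pow_eq_self {M : Type*} [Monoid M] {x : M} {m : ℕ} (hx : x ^ m = x)
    (k : ℕ) : x ^ m ^ k = x := by
  have hfix : Function.IsFixedPt (· ^ m) x := hx
  simpa only [Function.IsFixedPt, pow_iterate] using hfix.iterate k

theorem pow_pow_eq_pow_of_odd {M : Type*} [Monoid M] {x : M} {m t : ℕ} (hx : x ^ m ^ 2 = x)
    (ht : Odd t) : x ^ m ^ t = x ^ m := by
  have hper : Function.IsPeriodicPt (· ^ m) 2 x := by
    simpa only [Function.IsPeriodicPt, Function.IsFixedPt, pow_iterate] using hx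
  simpa only [pow_iterate, pow_one, Nat.odd_iff.mp ht] using (hper.iterate_mod_apply t).symm

theorem FiniteField.mem_fieldRange_iff_pow_natCard_eq_self {K L : Type*} [Field K] [Finite K]
    [Field L] (i : K →+* L) {x : L} : x ∈ i.fieldRange ↔ x ^ Nat.card K = x := by
  constructor
  · rintro ⟨y, rfl⟩
    have := Fintype.ofFinite K
    rw [← map_pow, Nat.card_eq_fintype_card, FiniteField.pow_card]
  · intro hx
    have hroot : ((X ^ Nat.card K - X : K[X]).map i).IsRoot x := by simp [hx]
    exact Polynomial.splits_X_pow_nat_card_sub_X.mem_range_of_isRoot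
      (X_pow_card_sub_X_ne_zero K Finite.one_lt_card) hroot

theorem Subfield.mem_iff_pow_natCard_eq_self {L : Type*} [Field L] (K : Subfield L) [Finite K]
    {x : L} : x ∈ K ↔ x ^ Nat.card K = x := by
  rw [← FiniteField.mem_fieldRange_iff_pow_natCard_eq_self K.subtype, Subfield.fieldRange_subtype]

theorem FiniteField.add_pow_natCard_pow {K L : Type*} [Field K] [Finite K] [CommRing L]
    (i : K →+* L) (n : ℕ) (x y : L) :
    (x + y) ^ Nat.card K ^ n = x ^ Nat.card K ^ n + y ^ Nat.card K ^ n := by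
  have := Fintype.ofFinite K
  let := i.toAlgebra
  simpa only [AlgHom.coe_pow, FiniteField.coe_frobeniusAlgHom, pow_iterate,
    Nat.card_eq_fintype_card] using map_add (FiniteField.frobeniusAlgHom K L ^ n) x y

theorem Subgroup.eq_rootsOfUnity_natCard {R : Type*} [CommRing R] [IsDomain R]
    (H : Subgroup Rˣ) [Finite H] : H = rootsOfUnity (Nat.card H) R := by
  refine Subgroup.eq_of_le_of_card_ge (fun x hx => ?_) (card_rootsOfUnity R _)
  rw [mem_rootsOfUnity]
  exact congrArg Subtype.val (pow_card_eq_one' (G := H) (x := ⟨x, hx⟩))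

theorem FiniteField.nonempty_ringHom_of_card_eq_pow {K L : Type*} [Field K] [Fintype K]
    [Field L] [Fintype L] {t : ℕ} (ht : t ≠ 0) (hcard : Fintype.card L = Fintype.card K ^ t) :
    Nonempty (K →+* L) := by
  set p := ringChar L
  have hp : Fact p.Prime := ⟨CharP.char_is_prime L p⟩
  have hK : CharP K p := by
    obtain ⟨n, hr, hn⟩ := FiniteField.card K (ringChar K)
    obtain ⟨m, -, hm⟩ := FiniteField.card L p
    have hdvd : ringChar K ∣ p ^ (m : ℕ) := by
      rw [← hm, hcard, hn, ← pow_mul]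
      exact dvd_pow_self _ (mul_ne_zero n.ne_zero ht)
    rw [← (Nat.prime_dvd_prime_iff_eq hr hp.out).mp (hr.dvd_of_dvd_pow hdvd)]
    exact ringChar.charP K
  let := ZMod.algebra K p
  let := ZMod.algebra L p
  have hfinrank : Module.finrank (ZMod p) L = Module.finrank (ZMod p) K * t := by
    apply Nat.pow_right_injective hp.out.two_le
    simp only [pow_mul, FiniteField.pow_finrank_eq_card, hcard]
  obtain ⟨f⟩ := FiniteField.nonempty_algHom_of_finrank_dvd (F := ZMod p) (K := K) (L := L)
    (hfinrank ▸ dvd_mul_right _ _)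
  exact ⟨f.toRingHom⟩

theorem eq_or_eq_inv_of_add_inv_eq_add_inv {K : Type*} [Field K] {a b : K} (ha : a ≠ 0)
    (hb : b ≠ 0) (h : a + a⁻¹ = b + b⁻¹) : a = b ∨ a = b⁻¹ := by
  have : (a - b) * (a * b - 1) = 0 := by
    field_simp at h
    linear_combination h
  rcases mul_eq_zero.mp this with h1 | h1
  · exact Or.inl (sub_eq_zero.mp h1)
  · exact Or.inr (eq_inv_of_mul_eq_one_left (sub_eq_zero.mp h1))

theorem FiniteField.mem_fieldRange_of_add_inv_mem {K L : Type*} [Field K] [Fintype K] [Field L]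
    [Fintype L] (i : K →+* L) {t : ℕ} (ht : Odd t) (hcard : Fintype.card L = Fintype.card K ^ t)
    {u : L} (hu : u ≠ 0) (h : u + u⁻¹ ∈ i.fieldRange) : u ∈ i.fieldRange := by
  rw [mem_fieldRange_iff_pow_natCard_eq_self, Nat.card_eq_fintype_card] at h ⊢
  have hadd := add_pow_natCard_pow i 1 u u⁻¹
  rw [pow_one, Nat.card_eq_fintype_card, h] at hadd
  rcases eq_or_eq_inv_of_add_inv_eq_add_inv (pow_ne_zero _ hu) hu
      (by rw [← inv_pow, ← hadd]) with hfix | hswap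
  · exact hfix
  -- `σ = (· ^ #K)` swaps `u` and `u⁻¹`, so `σ ^ t u = u⁻¹` as `t` is odd; but `σ ^ t = id` on `L`
  have hper : u ^ Fintype.card K ^ 2 = u := by rw [sq, pow_mul, hswap, inv_pow, hswap, inv_inv]
  rw [← pow_pow_eq_pow_of_odd hper ht, ← hcard, FiniteField.pow_card]

theorem mul_add_mul_pow_succ_eq {L : Type*} [Field L] {Q : ℕ}
    (hadd : ∀ x y : L, (x + y) ^ Q = x ^ Q + y ^ Q) {c₁ c₂ a b : L} (hc₁ : c₁ ^ Q = c₁)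
    (hc₂ : c₂ ^ Q = c₂) (ha : a ^ (Q + 1) = 1) (hb : b ^ (Q + 1) = 1) :
    (c₁ * a + c₂ * b) ^ (Q + 1) = c₁ ^ 2 + c₂ ^ 2 + c₁ * c₂ * (a * b⁻¹ + (a * b⁻¹)⁻¹) := by
  have ha0 : a ≠ 0 := by rintro rfl; simp at ha
  have hb0 : b ≠ 0 := by rintro rfl; simp at hb
  have haQ : a ^ Q = a⁻¹ := eq_inv_of_mul_eq_one_left (by rwa [← pow_succ])
  have hbQ : b ^ Q = b⁻¹ := eq_inv_of_mul_eq_one_left (by rwa [← pow_succ])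
  rw [pow_succ, hadd, mul_pow, mul_pow, hc₁, hc₂, haQ, hbQ]
  field_simp
  ring

def IsSumOfTwo {F : Type*} [Field F] (K : Subfield F) (H : Subgroup Fˣ) (μ : F) : Prop :=
  ∃ c₁ ∈ K, ∃ c₂ ∈ K, ∃ h₁ ∈ H, ∃ h₂ ∈ H, μ = c₁ * (h₁ : F) + c₂ * (h₂ : F)

section Transfer

variable {F F' : Type*} [Field F] [Field F'] {q0 s t : ℕ} (e : F →+* F')

theorem map_pow_pow_mul_eq [Fintype F] (ht : Odd t) (hF : Fintype.card F = q0 ^ (2 * s))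
    (x : F) :
    e x ^ q0 ^ (s * t) = e (x ^ q0 ^ s) := by
  have hx : x ^ (q0 ^ s) ^ 2 = x := by rw [← pow_mul, mul_comm, ← hF, FiniteField.pow_card]
  rw [← map_pow, pow_mul, pow_pow_eq_pow_of_odd hx ht]

theorem exists_mem_rootsOfUnity_map_eq [Fintype F] (ht : Odd t)
    (hF : Fintype.card F = q0 ^ (2 * s)) {A : F'ˣ} (hA : A ∈ rootsOfUnity (q0 ^ (s * t) + 1) F')
    (hAe : (A : F') ∈ e.fieldRange) : ∃ a ∈ rootsOfUnity (q0 ^ s + 1) F, e a = A := by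
  obtain ⟨x, hx⟩ := hAe
  have hx0 : x ≠ 0 := by rintro rfl; exact A.ne_zero (by rw [← hx, map_zero])
  refine ⟨Units.mk0 x hx0, ?_, hx⟩
  rw [mem_rootsOfUnity'] at hA ⊢
  apply e.injective
  rw [Units.val_mk0, map_one, ← hA, ← hx, pow_succ, pow_succ, map_mul,
    map_pow_pow_mul_eq e ht hF]

theorem exists_mem_map_eq_of_mem [Fintype F] [Finite F'] {K : Subfield F} {K' : Subfield F'}
    (hF : Fintype.card F = q0 ^ (2 * s)) (hK : Nat.card K = q0) (hK' : Nat.card K' = q0)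
    {c : F'} (hc : c ∈ K') : ∃ d ∈ K, e d = c := by
  rw [K'.mem_iff_pow_natCard_eq_self, hK'] at hc
  have hce : c ∈ e.fieldRange := by
    rw [FiniteField.mem_fieldRange_iff_pow_natCard_eq_self, Nat.card_eq_fintype_card, hF]
    exact pow_pow_eq_self_of_pow_eq_self hc _
  obtain ⟨d, rfl⟩ := hce
  refine ⟨d, ?_, rfl⟩
  rw [K.mem_iff_pow_natCard_eq_self, hK]
  exact e.injective (by rw [map_pow, hc])

theorem mem_fieldRange_of_map_eq_mul {μ d : F} {B : F'} (hd : d ≠ 0) (h : e μ = e d * B) :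
    B ∈ e.fieldRange :=
  ⟨μ / d, by rw [map_div₀, h, mul_div_cancel_left₀ _ ((map_ne_zero e).mpr hd)]⟩

theorem mem_fieldRange_of_map_eq_add [Fintype F] [Fintype F'] {K : Subfield F} (ht : Odd t)
    (hF : Fintype.card F = q0 ^ (2 * s)) (hF' : Fintype.card F' = q0 ^ (2 * (s * t)))
    (hK : Nat.card K = q0) {μ d₁ d₂ : F} (hμ : μ ≠ 0) (hd₁ : d₁ ∈ K) (hd₂ : d₂ ∈ K)
    (hd₁0 : d₁ ≠ 0) (hd₂0 : d₂ ≠ 0) {A B : F'ˣ} (hA : A ∈ rootsOfUnity (q0 ^ (s * t) + 1) F')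
    (hB : B ∈ rootsOfUnity (q0 ^ (s * t) + 1) F') (hμAB : e μ = e d₁ * A + e d₂ * B) :
    (A : F') ∈ e.fieldRange ∧ (B : F') ∈ e.fieldRange := by
  have hKQ : ∀ d ∈ K, e d ^ q0 ^ (s * t) = e d := fun d hd => by
    rw [← map_pow, pow_pow_eq_self_of_pow_eq_self (hK ▸ (K.mem_iff_pow_natCard_eq_self.mp hd))]
  have hadd : ∀ x y : F', (x + y) ^ q0 ^ (s * t) = x ^ q0 ^ (s * t) + y ^ q0 ^ (s * t) :=
    hK ▸ FiniteField.add_pow_natCard_pow (e.comp K.subtype) (s * t)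
  have hA0 := A.ne_zero
  have hB0 := B.ne_zero
  have he₁ : e d₁ ≠ 0 := (map_ne_zero e).mpr hd₁0
  have he₂ : e d₂ ≠ 0 := (map_ne_zero e).mpr hd₂0
  -- the norm `x ↦ x ^ (Q + 1)` of `e μ = e d₁ A + e d₂ B` puts `u + u⁻¹`, `u = A / B`, in `e F`
  have hsum : A * (B : F')⁻¹ + (A * (B : F')⁻¹)⁻¹ =
      e ((μ ^ (q0 ^ s + 1) - d₁ ^ 2 - d₂ ^ 2) / (d₁ * d₂)) := by
    have hnorm := mul_add_mul_pow_succ_eq hadd (hKQ d₁ hd₁) (hKQ d₂ hd₂)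
      ((mem_rootsOfUnity' _ _).mp hA) ((mem_rootsOfUnity' _ _).mp hB)
    rw [← hμAB] at hnorm
    rw [map_div₀, map_sub, map_sub, map_pow, map_pow, map_pow, map_mul, pow_succ, ← map_pow,
      ← map_pow_pow_mul_eq e ht hF, ← pow_succ, hnorm]
    field_simp
    ring
  obtain ⟨v, hv⟩ := FiniteField.mem_fieldRange_of_add_inv_mem e ht
    (by rw [hF', hF, ← pow_mul, mul_assoc]) (mul_ne_zero hA0 (inv_ne_zero hB0)) ⟨_, hsum.symm⟩
  have hy : e μ = e (d₁ * v + d₂) * B := by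
    rw [hμAB, map_add, map_mul, hv]
    field_simp
  have hy0 : d₁ * v + d₂ ≠ 0 := fun h =>
    hμ ((map_eq_zero e).mp (by rw [hy, h, map_zero, zero_mul]))
  have hBe := mem_fieldRange_of_map_eq_mul e hy0 hy
  have hA : (A : F') = e v * B := by rw [hv]; field_simp
  exact ⟨hA ▸ mul_mem ⟨v, rfl⟩ hBe, hBe⟩

theorem IsSumOfTwo.of_map [Fintype F] [Fintype F'] {K : Subfield F} {K' : Subfield F'}
    (ht : Odd t) (hF : Fintype.card F = q0 ^ (2 * s))
    (hF' : Fintype.card F' = q0 ^ (2 * (s * t))) (hK : Nat.card K = q0) (hK' : Nat.card K' = q0)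
    {μ : F} (h : IsSumOfTwo K' (rootsOfUnity (q0 ^ (s * t) + 1) F') (e μ)) :
    IsSumOfTwo K (rootsOfUnity (q0 ^ s + 1) F) μ := by
  by_cases hμ : μ = 0
  · exact ⟨0, K.zero_mem, 0, K.zero_mem, 1, one_mem _, 1, one_mem _, by simp [hμ]⟩
  obtain ⟨c₁, hc₁, c₂, hc₂, A, hA, B, hB, hμAB⟩ := h
  obtain ⟨d₁, hd₁, rfl⟩ := exists_mem_map_eq_of_mem e hF hK hK' hc₁
  obtain ⟨d₂, hd₂, rfl⟩ := exists_mem_map_eq_of_mem e hF hK hK' hc₂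
  -- if one coefficient vanishes, the other term can be used twice
  obtain ⟨A', hA', B', hB', ⟨hA'e, hB'e⟩, hμAB'⟩ :
      ∃ A' ∈ rootsOfUnity (q0 ^ (s * t) + 1) F', ∃ B' ∈ rootsOfUnity (q0 ^ (s * t) + 1) F',
        ((A' : F') ∈ e.fieldRange ∧ (B' : F') ∈ e.fieldRange) ∧ e μ = e d₁ * A' + e d₂ * B' := by
    by_cases hd₁0 : d₁ = 0
    · simp only [hd₁0, map_zero, zero_mul, zero_add] at hμAB ⊢
      have hBe := mem_fieldRange_of_map_eq_mul e (fun h => hμ (by simpa [h] using hμAB)) hμAB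
      exact ⟨B, hB, B, hB, ⟨hBe, hBe⟩, hμAB⟩
    by_cases hd₂0 : d₂ = 0
    · simp only [hd₂0, map_zero, zero_mul, add_zero] at hμAB ⊢
      have hAe := mem_fieldRange_of_map_eq_mul e hd₁0 hμAB
      exact ⟨A, hA, A, hA, ⟨hAe, hAe⟩, hμAB⟩
    exact ⟨A, hA, B, hB, mem_fieldRange_of_map_eq_add e ht hF hF' hK hμ hd₁ hd₂ hd₁0 hd₂0 hA hB
      hμAB, hμAB⟩
  obtain ⟨a, ha, hae⟩ := exists_mem_rootsOfUnity_map_eq e ht hF hA' hA'e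
  obtain ⟨b, hb, hbe⟩ := exists_mem_rootsOfUnity_map_eq e ht hF hB' hB'e
  exact ⟨d₁, hd₁, d₂, hd₂, a, ha, b, hb, e.injective (by rw [hμAB', map_add, map_mul, map_mul,
    hae, hbe])⟩

end Transfer

theorem covering_radius_three_is_inherited_general (q0 s t : ℕ) (ht : Odd t)
    (F : Type*) [Field F] [Fintype F] (hF : Fintype.card F = q0 ^ (2 * s))
    (K : Subfield F) (hK : Nat.card K = q0)
    (H : Subgroup Fˣ) (hH : Nat.card H = q0 ^ s + 1)
    (F' : Type*) [Field F'] [Fintype F'] (hF' : Fintype.card F' = q0 ^ (2 * (s * t)))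
    (K' : Subfield F') (hK' : Nat.card K' = q0)
    (H' : Subgroup F'ˣ) (hH' : Nat.card H' = q0 ^ (s * t) + 1)
    (h : ∃ μ : F, ∀ c1 c2 : F, c1 ∈ K → c2 ∈ K →
      ∀ h1 h2 : Fˣ, h1 ∈ H → h2 ∈ H → μ ≠ c1 * (h1 : F) + c2 * (h2 : F)) :
    ∃ μ' : F', ∀ c1 c2 : F', c1 ∈ K' → c2 ∈ K' →
      ∀ h1 h2 : F'ˣ, h1 ∈ H' → h2 ∈ H' →
        μ' ≠ c1 * (h1 : F') + c2 * (h2 : F') := by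
  obtain ⟨μ, hμ⟩ := h
  obtain ⟨e⟩ := FiniteField.nonempty_ringHom_of_card_eq_pow (K := F) (L := F') ht.pos.ne'
    (by rw [hF', hF, ← pow_mul, mul_assoc])
  rw [H.eq_rootsOfUnity_natCard, hH] at hμ
  rw [H'.eq_rootsOfUnity_natCard, hH']
  refine ⟨e μ, fun c₁ c₂ hc₁ hc₂ h₁ h₂ hh₁ hh₂ hμ' => ?_⟩
  obtain ⟨d₁, hd₁, d₂, hd₂, a, ha, b, hb, hab⟩ :=
    IsSumOfTwo.of_map e ht hF hF' hK hK' ⟨c₁, hc₁, c₂, hc₂, h₁, hh₁, h₂, hh₂, hμ'⟩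
  exact hμ d₁ d₂ hd₁ hd₂ a b ha hb hab

/-- If the covering radius of `C_s(q0)` is `3` (some `μ` is not a sum of two
elements `c·h`), then the covering radius of `C_(st)(q0)` is `3` as well, for
any odd `t ≥ 1`. -/
theorem covering_radius_three_is_inherited (q0 s t : ℕ) (hq0 : IsPrimePow q0)
    (hq0odd : Odd q0) (hq07 : q0 % 8 = 7) (hs : Odd s) (ht : Odd t)
    (F : Type*) [Field F] [Fintype F] (hF : Fintype.card F = q0 ^ (2 * s))
    (K : Subfield F) (hK : Nat.card K = q0)
    (H : Subgroup Fˣ) (hH : Nat.card H = q0 ^ s + 1)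
    (F' : Type*) [Field F'] [Fintype F'] (hF' : Fintype.card F' = q0 ^ (2 * (s * t)))
    (K' : Subfield F') (hK' : Nat.card K' = q0)
    (H' : Subgroup F'ˣ) (hH' : Nat.card H' = q0 ^ (s * t) + 1)
    (h : ∃ μ : F, ∀ c1 c2 : F, c1 ∈ K → c2 ∈ K →
      ∀ h1 h2 : Fˣ, h1 ∈ H → h2 ∈ H → μ ≠ c1 * (h1 : F) + c2 * (h2 : F)) :
    ∃ μ' : F', ∀ c1 c2 : F', c1 ∈ K' → c2 ∈ K' →
      ∀ h1 h2 : F'ˣ, h1 ∈ H' → h2 ∈ H' →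
        μ' ≠ c1 * (h1 : F') + c2 * (h2 : F') :=
  covering_radius_three_is_inherited_general q0 s t ht F hF K hK H hH F' hF' K' hK' H' hH' h
end

section
/- Assume the standard setup, and let ℓ ≥ 3 be an integer with q ≡ 2^ℓ − 1 (mod 2^{ℓ+1}). Let H_ℓ be the unique subgroup of Fˣ of order (q+1)/2^ℓ, let θ ∈ Fˣ be an element of multiplicative order 2^ℓ, and let 𝓗 = { θ^i·h : 0 ≤ i ≤ 2^{ℓ−1} − 1, h ∈ H_ℓ } ⊆ Fˣ. Then: (1) H is the disjoint union of 𝓗 and −𝓗 = { −β : β ∈ 𝓗 }; (2) the only elements of H that lie in K are 1 and −1; and (3) for all β1, β2 ∈ 𝓗 with β1 ≠ β2 and all nonzero c1, c2 ∈ K, one has c1·β1 ≠ c2·β2 (so the twisted half generalized Zetterberg code C_s^t(q0), whose parity check matrix has the elements of 𝓗 as columns, has no nonzero codeword of weight at most 2, i.e., minimum distance at least 3). -/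
def twistedHalfSet {F : Type*} [Field F] (Hl : Subgroup Fˣ) (θ : Fˣ) (ℓ : ℕ) :
    Set Fˣ :=
  {β | ∃ i : ℕ, i < 2 ^ (ℓ - 1) ∧ ∃ h ∈ Hl, β = θ ^ i * h}

/-!
Since `q ≡ 2^ℓ - 1 (mod 2^(ℓ+1))`, we have `q + 1 = 2^ℓ m` with `m` odd, so `H`, `H_ℓ` and `⟨θ⟩`
are the groups of `(q+1)`-th, `m`-th and `2^ℓ`-th roots of unity in `F`, and coprimality gives
`H = ⟨θ⟩ × H_ℓ`: every `x ∈ H` is uniquely `θ^j h` with `j < 2^ℓ`, `h ∈ H_ℓ`. As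
`θ^(2^(ℓ-1)) = -1`, the exponents `j < 2^(ℓ-1)` give `𝓗` and the others give `-𝓗`.
An element of `H ∩ K` has order dividing both `q + 1` and `q0 - 1 ∣ q - 1`, hence `2`.
Finally `c₁β₁ = c₂β₂` makes `β₁/β₂ ∈ H ∩ K = {±1}`, and `β₁ = -β₂` is excluded by `𝓗 ∩ -𝓗 = ∅`.
-/

theorem two_pow_mul_div_eq_and_odd_of_modEq {q ℓ : ℕ} (h : q ≡ 2 ^ ℓ - 1 [MOD 2 ^ (ℓ + 1)]) :
    2 ^ ℓ * ((q + 1) / 2 ^ ℓ) = q + 1 ∧ Odd ((q + 1) / 2 ^ ℓ) := by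
  have hpos : 1 ≤ 2 ^ ℓ := Nat.one_le_two_pow
  have hmod : q % 2 ^ (ℓ + 1) = 2 ^ ℓ - 1 := by
    rw [h, Nat.mod_eq_of_lt (by rw [pow_succ]; omega)]
  have hdiv := Nat.div_add_mod q (2 ^ (ℓ + 1))
  set k := q / 2 ^ (ℓ + 1)
  have hq : q + 1 = 2 ^ ℓ * (2 * k + 1) := by
    rw [hmod, pow_succ] at hdiv
    zify [hpos] at hdiv ⊢
    linear_combination -hdiv
  rw [hq, Nat.mul_div_cancel_left _ (by positivity)]
  exact ⟨rfl, odd_two_mul_add_one _⟩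

theorem Subgroup.eq_rootsOfUnity_of_natCard_eq {R : Type*} [CommRing R] [IsDomain R]
    (A : Subgroup Rˣ) {n : ℕ} [NeZero n] (hA : Nat.card A = n) : A = rootsOfUnity n R :=
  Subgroup.eq_of_le_of_card_ge
    (fun _ hx ↦ (mem_rootsOfUnity _ _).2 <|
      orderOf_dvd_iff_pow_eq_one.1 (hA ▸ A.orderOf_dvd_natCard hx))
    (hA ▸ card_rootsOfUnity R n)

theorem IsPrimitiveRoot.pow_two_pow_pred_eq_neg_one {R : Type*} [CommRing R] [IsDomain R]
    {ζ : Rˣ} {ℓ : ℕ} (h : IsPrimitiveRoot ζ (2 ^ ℓ)) (hℓ : 0 < ℓ) : ζ ^ 2 ^ (ℓ - 1) = -1 := by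
  have h2 : IsPrimitiveRoot (ζ ^ 2 ^ (ℓ - 1)) 2 :=
    h.pow (by positivity) (by rw [mul_two, Nat.two_pow_pred_add_two_pow_pred hℓ])
  exact Units.ext <| by simpa using (IsPrimitiveRoot.coe_units_iff.2 h2).eq_neg_one_of_two_right

section CoprimeOrders

variable {G : Type*} [CommGroup G] {a b : ℕ}

theorem exists_mul_eq_of_pow_mul_eq_one (hab : a.Coprime b) {x : G} (hx : x ^ (a * b) = 1) :
    ∃ y z : G, y ^ a = 1 ∧ z ^ b = 1 ∧ y * z = x := by
  have hbezout : (a : ℤ) * a.gcdA b + b * a.gcdB b = 1 := by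
    have := Nat.gcd_eq_gcd_ab a b
    rw [hab.gcd_eq_one] at this
    exact_mod_cast this.symm
  refine ⟨x ^ (b * a.gcdB b : ℤ), x ^ (a * a.gcdA b : ℤ), ?_, ?_, ?_⟩
  · rw [← zpow_natCast, ← zpow_mul, show (b * a.gcdB b : ℤ) * a = (a * b : ℕ) * a.gcdB b by
      push_cast; ring, zpow_mul, zpow_natCast, hx, one_zpow]
  · rw [← zpow_natCast, ← zpow_mul, show (a * a.gcdA b : ℤ) * b = (a * b : ℕ) * a.gcdA b by
      push_cast; ring, zpow_mul, zpow_natCast, hx, one_zpow]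
  · rw [← zpow_add, add_comm, hbezout, zpow_one]

theorem pow_eq_pow_of_pow_mul_eq_pow_mul (hab : a.Coprime b) {θ h h' : G} (hθ : θ ^ a = 1)
    (hh : h ^ b = 1) (hh' : h' ^ b = 1) {i j : ℕ} (e : θ ^ i * h = θ ^ j * h') :
    θ ^ i = θ ^ j := by
  have hquot : θ ^ i / θ ^ j = h' / h := by
    rw [div_eq_div_iff_mul_eq_mul, e, mul_comm]
  rw [← div_eq_one, ← pow_eq_one_iff_of_coprime hab]
  constructor
  · rw [div_pow, pow_right_comm, hθ, one_pow, pow_right_comm, hθ, one_pow, div_one]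
  · rw [hquot, div_pow, hh, hh', div_one]

end CoprimeOrders

section TwistedHalfSet

variable {F : Type*} [Field F] {θ : Fˣ} {ℓ m : ℕ}

theorem twistedHalfSet_subset_rootsOfUnity (hθ : θ ^ 2 ^ ℓ = 1) :
    twistedHalfSet (rootsOfUnity m F) θ ℓ ⊆ rootsOfUnity (2 ^ ℓ * m) F := by
  rintro _ ⟨i, -, h, hh, rfl⟩
  exact mul_mem
    (pow_mem (rootsOfUnity_le_of_dvd (dvd_mul_right _ _) ((mem_rootsOfUnity _ _).2 hθ)) i)
    (rootsOfUnity_le_of_dvd (dvd_mul_left _ _) hh)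

theorem mem_twistedHalfSet_or_neg_mem (hθ : IsPrimitiveRoot θ (2 ^ ℓ)) (hℓ : 0 < ℓ)
    (hm : (2 ^ ℓ).Coprime m) {x : Fˣ}
    (hx : x ∈ rootsOfUnity (2 ^ ℓ * m) F) :
    x ∈ twistedHalfSet (rootsOfUnity m F) θ ℓ ∨ -x ∈ twistedHalfSet (rootsOfUnity m F) θ ℓ := by
  obtain ⟨y, z, hy, hz, rfl⟩ := exists_mul_eq_of_pow_mul_eq_one hm ((mem_rootsOfUnity _ _).1 hx)
  obtain ⟨j, hj, rfl⟩ := hθ.eq_pow_of_mem_rootsOfUnity ((mem_rootsOfUnity _ _).2 hy)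
  have hz : z ∈ rootsOfUnity m F := (mem_rootsOfUnity _ _).2 hz
  have hhalf := Nat.two_pow_pred_add_two_pow_pred hℓ
  by_cases hj' : j < 2 ^ (ℓ - 1)
  · exact .inl ⟨j, hj', z, hz, rfl⟩
  · obtain ⟨k, rfl⟩ := Nat.exists_eq_add_of_le (not_lt.1 hj')
    refine .inr ⟨k, by omega, z, hz, ?_⟩
    rw [pow_add, hθ.pow_two_pow_pred_eq_neg_one hℓ, neg_one_mul, neg_mul, neg_neg]

theorem neg_notMem_twistedHalfSet (hθ : IsPrimitiveRoot θ (2 ^ ℓ)) (hℓ : 0 < ℓ)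
    (hm : (2 ^ ℓ).Coprime m) {x : Fˣ}
    (hx : x ∈ twistedHalfSet (rootsOfUnity m F) θ ℓ) :
    -x ∉ twistedHalfSet (rootsOfUnity m F) θ ℓ := by
  obtain ⟨i, hi, h, hh, rfl⟩ := hx
  rintro ⟨j, hj, h', hh', e⟩
  have hhalf := Nat.two_pow_pred_add_two_pow_pred hℓ
  have e' : θ ^ (2 ^ (ℓ - 1) + i) * h = θ ^ j * h' := by
    rw [pow_add, hθ.pow_two_pow_pred_eq_neg_one hℓ, ← e, neg_one_mul, neg_mul]
  have := hθ.pow_inj (by omega) (by omega) <| pow_eq_pow_of_pow_mul_eq_pow_mul hm hθ.pow_eq_one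
    ((mem_rootsOfUnity _ _).1 hh) ((mem_rootsOfUnity _ _).1 hh') e'
  omega

theorem coe_rootsOfUnity_eq_twistedHalfSet_union (hθ : IsPrimitiveRoot θ (2 ^ ℓ)) (hℓ : 0 < ℓ)
    (hm : (2 ^ ℓ).Coprime m) :
    (rootsOfUnity (2 ^ ℓ * m) F : Set Fˣ) =
      twistedHalfSet (rootsOfUnity m F) θ ℓ ∪ {β | -β ∈ twistedHalfSet (rootsOfUnity m F) θ ℓ} := by
  refine Set.Subset.antisymm (fun x hx ↦ mem_twistedHalfSet_or_neg_mem hθ hℓ hm hx) ?_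
  have hsub := twistedHalfSet_subset_rootsOfUnity (m := m) hθ.pow_eq_one
  have heven : Even (2 ^ ℓ * m) := (Nat.even_pow.2 ⟨even_two, hℓ.ne'⟩).mul_right m
  rintro x (hx | hx)
  · exact hsub hx
  · rw [SetLike.mem_coe, mem_rootsOfUnity, ← heven.neg_pow]
    exact (mem_rootsOfUnity _ _).1 (hsub hx)

end TwistedHalfSet

theorem val_mem_subfield_iff_of_mem_rootsOfUnity {F : Type*} [Field F] {K : Subfield F}
    [Finite K] {s : ℕ} {h : Fˣ} (hh : h ∈ rootsOfUnity (Nat.card K ^ s + 1) F) :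
    (h : F) ∈ K ↔ (h : F) = 1 ∨ (h : F) = -1 := by
  refine ⟨fun hK ↦ ?_, by rintro (h1 | h1) <;> simp [h1, K.one_mem, K.neg_mem]⟩
  have hpred : h ^ (Nat.card K - 1) = 1 := by
    have := pow_card_eq_one'
      (x := Units.mk0 (⟨h, hK⟩ : K) fun h0 ↦ h.ne_zero (congrArg Subtype.val h0))
    rw [Nat.card_units] at this
    exact Units.ext (by simpa [Subtype.ext_iff] using congrArg Units.val this)
  have hsub : h ^ (Nat.card K ^ s - 1) = 1 := by
    obtain ⟨c, hc⟩ := Nat.sub_one_dvd_pow_sub_one (Nat.card K) s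
    rw [hc, pow_mul, hpred, one_pow]
  have hsq : h ^ 2 = 1 := by
    have hge : 1 ≤ Nat.card K ^ s := Nat.one_le_pow _ _ Nat.card_pos
    refine mul_left_cancel (a := h ^ (Nat.card K ^ s - 1)) ?_
    rw [← pow_add, show Nat.card K ^ s - 1 + 2 = Nat.card K ^ s + 1 by omega,
      (mem_rootsOfUnity _ _).1 hh, hsub, one_mul]
  rcases Units.eq_or_eq_neg_of_sq_eq_sq h 1 (by rw [hsq, one_pow]) with rfl | rfl <;> simp

theorem mul_ne_mul_of_neg_notMem {F : Type*} [Field F] {K : Subfield F} {H : Subgroup Fˣ}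
    (hHK : ∀ h ∈ H, (h : F) ∈ K → (h : F) = 1 ∨ (h : F) = -1) {S : Set Fˣ} (hSH : S ⊆ H)
    (hS : ∀ β ∈ S, -β ∉ S) {β₁ β₂ : Fˣ} (hβ₁ : β₁ ∈ S) (hβ₂ : β₂ ∈ S) (hne : β₁ ≠ β₂)
    {c₁ c₂ : F} (hc₁ : c₁ ∈ K) (hc₂ : c₂ ∈ K) (hc₁0 : c₁ ≠ 0) : c₁ * β₁ ≠ c₂ * β₂ := by
  intro e
  have hquot : ((β₁ / β₂ : Fˣ) : F) = c₂ / c₁ := by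
    rw [Units.val_div_eq_div_val, div_eq_div_iff β₂.ne_zero hc₁0, mul_comm, e, mul_comm]
  rcases hHK _ (div_mem (hSH hβ₁) (hSH hβ₂)) (hquot ▸ div_mem hc₂ hc₁) with h1 | h1
  · exact hne (div_eq_one.1 (Units.ext h1))
  · have : β₁ = -β₂ := by
      rw [← neg_one_mul]
      exact div_eq_iff_eq_mul.1 (Units.ext (by simpa using h1))
    exact hS _ hβ₂ (this ▸ hβ₁)

theorem twisted_half_min_dist_ge_three_general (q0 s q ℓ : ℕ) (hq : q = q0 ^ s) (hℓ : 3 ≤ ℓ)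
    (hqmod : q ≡ 2 ^ ℓ - 1 [MOD 2 ^ (ℓ + 1)])
    (F : Type*) [Field F] [Fintype F]
    (K : Subfield F) (hK : Nat.card K = q0)
    (H : Subgroup Fˣ) (hH : Nat.card H = q + 1)
    (Hl : Subgroup Fˣ) (hHl : Nat.card Hl = (q + 1) / 2 ^ ℓ)
    (θ : Fˣ) (hθ : orderOf θ = 2 ^ ℓ) :
    ((H : Set Fˣ) = twistedHalfSet Hl θ ℓ ∪ {β | -β ∈ twistedHalfSet Hl θ ℓ} ∧
        twistedHalfSet Hl θ ℓ ∩ {β | -β ∈ twistedHalfSet Hl θ ℓ} = ∅) ∧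
      (∀ h : Fˣ, h ∈ H → ((h : F) ∈ K ↔ (h : F) = 1 ∨ (h : F) = -1)) ∧
      (∀ β1 ∈ twistedHalfSet Hl θ ℓ, ∀ β2 ∈ twistedHalfSet Hl θ ℓ, β1 ≠ β2 →
        ∀ c1 c2 : F, c1 ∈ K → c2 ∈ K → c1 ≠ 0 → c2 ≠ 0 →
          c1 * (β1 : F) ≠ c2 * (β2 : F)) := by
  obtain ⟨hfac, hodd⟩ := two_pow_mul_div_eq_and_odd_of_modEq hqmod
  set m := (q + 1) / 2 ^ ℓ
  have : NeZero m := ⟨hodd.pos.ne'⟩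
  have hcop : (2 ^ ℓ).Coprime m := (Nat.coprime_two_left.2 hodd).pow_left ℓ
  have hθ' : IsPrimitiveRoot θ (2 ^ ℓ) := hθ ▸ IsPrimitiveRoot.orderOf θ
  have hℓ0 : 0 < ℓ := by omega
  have hHK : ∀ h ∈ H, (h : F) ∈ K ↔ (h : F) = 1 ∨ (h : F) = -1 := fun h hh ↦
    val_mem_subfield_iff_of_mem_rootsOfUnity (s := s)
      (by rwa [hK, ← hq, ← H.eq_rootsOfUnity_of_natCard_eq hH])
  obtain rfl : Hl = rootsOfUnity m F := Hl.eq_rootsOfUnity_of_natCard_eq hHl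
  obtain rfl : H = rootsOfUnity (2 ^ ℓ * m) F := hfac ▸ H.eq_rootsOfUnity_of_natCard_eq hH
  have hdisj := fun x hx ↦ neg_notMem_twistedHalfSet (x := x) hθ' hℓ0 hcop hx
  refine ⟨⟨coe_rootsOfUnity_eq_twistedHalfSet_union hθ' hℓ0 hcop,
    Set.eq_empty_of_forall_notMem fun x hx ↦ hdisj x hx.1 hx.2⟩, hHK, ?_⟩
  intro β₁ hβ₁ β₂ hβ₂ hne c₁ c₂ hc₁ hc₂ hc₁0 _
  exact mul_ne_mul_of_neg_notMem (fun h hh ↦ (hHK h hh).1)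
    (twistedHalfSet_subset_rootsOfUnity hθ'.pow_eq_one) hdisj hβ₁ hβ₂ hne hc₁ hc₂ hc₁0

/-- Standard setup, `ℓ ≥ 3`, `q ≡ 2^ℓ − 1 (mod 2^(ℓ+1))`, `H_ℓ` the subgroup of
order `(q+1)/2^ℓ`, `θ` of order `2^ℓ`, and `𝓗 = { θ^i·h : 0 ≤ i < 2^(ℓ−1), h ∈ H_ℓ }`.
Then (1) `H` is the disjoint union of `𝓗` and `−𝓗`; (2) the only elements of `H`
lying in `K` are `±1`; (3) distinct elements of `𝓗` are not proportional over
`Kˣ` — so the twisted half generalized Zetterberg code has minimum distance `≥ 3`. -/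
theorem twisted_half_min_dist_ge_three (q0 s q ℓ : ℕ) (hq0 : IsPrimePow q0)
    (hq0odd : Odd q0) (hs : Odd s) (hq : q = q0 ^ s) (hℓ : 3 ≤ ℓ)
    (hqmod : q ≡ 2 ^ ℓ - 1 [MOD 2 ^ (ℓ + 1)])
    (F : Type*) [Field F] [Fintype F] (hF : Fintype.card F = q ^ 2)
    (K : Subfield F) (hK : Nat.card K = q0)
    (H : Subgroup Fˣ) (hH : Nat.card H = q + 1)
    (Hl : Subgroup Fˣ) (hHl : Nat.card Hl = (q + 1) / 2 ^ ℓ)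
    (θ : Fˣ) (hθ : orderOf θ = 2 ^ ℓ) :
    ((H : Set Fˣ) = twistedHalfSet Hl θ ℓ ∪ {β | -β ∈ twistedHalfSet Hl θ ℓ} ∧
        twistedHalfSet Hl θ ℓ ∩ {β | -β ∈ twistedHalfSet Hl θ ℓ} = ∅) ∧
      (∀ h : Fˣ, h ∈ H → ((h : F) ∈ K ↔ (h : F) = 1 ∨ (h : F) = -1)) ∧
      (∀ β1 ∈ twistedHalfSet Hl θ ℓ, ∀ β2 ∈ twistedHalfSet Hl θ ℓ, β1 ≠ β2 →
        ∀ c1 c2 : F, c1 ∈ K → c2 ∈ K → c1 ≠ 0 → c2 ≠ 0 →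
          c1 * (β1 : F) ≠ c2 * (β2 : F)) :=
  twisted_half_min_dist_ge_three_general q0 s q ℓ hq hℓ hqmod F K hK H hH Hl hHl θ hθ
end
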